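/- arXiv:2311.14610 — 3 statements merged into one kernel-verified Lean document; each statement's English description precedes it below -/
import Mathlib

section
/- Let 𝓗 be a complex Hilbert space, M a von Neumann algebra acting on 𝓗, and Ω ∈ 𝓗. Let H be the closure of the real-linear span of {AΩ : A ∈ M, A = A*}. Then H is a standard subspace of 𝓗 if and only if Ω is cyclic for M (i.e. {AΩ : A ∈ M} is dense in 𝓗) and separating for M (i.e. for A ∈ M, AΩ = 0 implies A = 0). -/
/-!
Write `H` for the closure of `M_sa Ω`. Since every `A ∈ M` is `ℜ A + i ℑ A`, the sets `H + iH` and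
`MΩ` have the same closure, so density of `H + iH` is cyclicity of `Ω`.

If `H ∩ iH = 0`, `D ∈ M` is self-adjoint and `DΩ = 0`, then for `A ∈ M` and `z ∈ {1, i}` the vector
`z DAΩ` is `TΩ` for the self-adjoint `T = z DA + (z DA)* ∈ M`; hence `DAΩ ∈ H ∩ iH`, so `D` vanishes
on the dense `MΩ`. Applied to `D = A*A` this shows that `Ω` is separating.

Conversely, if `Ω` is separating then `M'Ω` is dense: the projection onto its closure lies in
`M'' = M` and fixes `Ω`. For self-adjoint `B ∈ M'` and `A ∈ M` the number `⟪BΩ, AΩ⟫` is real, so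
`h, ih ∈ H` forces `h ⟂ M'Ω`, i.e. `h = 0`.
-/

/-- A standard subspace of a complex Hilbert space `𝓗`: a closed real-linear subspace `H`
such that `H + iH` is dense and `H ∩ iH = {0}`. -/
def IsStandardSubspace {𝓗 : Type*} [NormedAddCommGroup 𝓗] [InnerProductSpace ℂ 𝓗]
    [CompleteSpace 𝓗] (H : Submodule ℝ 𝓗) : Prop :=
  IsClosed (H : Set 𝓗) ∧
    Dense {x : 𝓗 | ∃ h₁ ∈ H, ∃ h₂ ∈ H, x = h₁ + Complex.I • h₂} ∧
    ∀ x ∈ H, (∃ h ∈ H, x = Complex.I • h) → x = 0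

open Complex ComplexStarModule

namespace StarSubalgebra

variable {𝒜 : Type*} [Ring 𝒜] [StarRing 𝒜] [Algebra ℂ 𝒜] [StarModule ℂ 𝒜]
  (S : StarSubalgebra ℂ 𝒜) {a : 𝒜}

lemma realPart_mem (ha : a ∈ S) : (ℜ a : 𝒜) ∈ S := by
  rw [realPart_apply_coe, ← algebraMap_smul ℂ]
  exact S.smul_mem (add_mem ha (star_mem ha)) _

lemma imaginaryPart_mem (ha : a ∈ S) : (ℑ a : 𝒜) ∈ S := by
  rw [imaginaryPart_apply_coe, ← algebraMap_smul ℂ]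
  exact S.smul_mem (S.smul_mem (sub_mem ha (star_mem ha)) _) _

end StarSubalgebra

lemma ContinuousLinearMap.apply_eq_realPart_add_I_smul_imaginaryPart {𝓗 : Type*}
    [NormedAddCommGroup 𝓗] [InnerProductSpace ℂ 𝓗] [CompleteSpace 𝓗] (A : 𝓗 →L[ℂ] 𝓗) (x : 𝓗) :
    A x = (ℜ A : 𝓗 →L[ℂ] 𝓗) x + I • (ℑ A : 𝓗 →L[ℂ] 𝓗) x := by
  conv_lhs => rw [← realPart_add_I_smul_imaginaryPart A]
  rfl

namespace VonNeumannAlgebra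

variable {𝓗 : Type*} [NormedAddCommGroup 𝓗] [InnerProductSpace ℂ 𝓗] [CompleteSpace 𝓗]
  (M : VonNeumannAlgebra 𝓗) (Ω : 𝓗)

def orbit : Submodule ℂ 𝓗 where
  carrier := {x | ∃ A ∈ M, x = A Ω}
  add_mem' := by
    rintro _ _ ⟨A, hA, rfl⟩ ⟨B, hB, rfl⟩
    exact ⟨A + B, add_mem hA hB, rfl⟩
  zero_mem' := ⟨0, zero_mem _, rfl⟩
  smul_mem' := by
    rintro c _ ⟨A, hA, rfl⟩
    exact ⟨c • A, M.smul_mem hA c, rfl⟩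

noncomputable def selfAdjointOrbitClosure : Submodule ℝ 𝓗 :=
  (Submodule.span ℝ {x | ∃ A ∈ M, IsSelfAdjoint A ∧ x = A Ω}).topologicalClosure

variable {M Ω}

lemma apply_mem_orbit {A : 𝓗 →L[ℂ] 𝓗} (hA : A ∈ M) : A Ω ∈ orbit M Ω := ⟨A, hA, rfl⟩

lemma apply_mem_selfAdjointOrbitClosure {A : 𝓗 →L[ℂ] 𝓗} (hA : A ∈ M) (hsa : IsSelfAdjoint A) :
    A Ω ∈ selfAdjointOrbitClosure M Ω :=
  Submodule.le_topologicalClosure _ (Submodule.subset_span ⟨A, hA, hsa, rfl⟩)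

lemma selfAdjointOrbitClosure_le :
    selfAdjointOrbitClosure M Ω ≤ (orbit M Ω).topologicalClosure.restrictScalars ℝ := by
  refine Submodule.topologicalClosure_minimal _ ?_ (orbit M Ω).isClosed_topologicalClosure
  rw [Submodule.span_le]
  rintro _ ⟨A, hA, -, rfl⟩
  exact (orbit M Ω).le_topologicalClosure (apply_mem_orbit hA)

variable (M Ω) in
lemma dense_orbit_iff_dense_add_I_smul : Dense (orbit M Ω : Set 𝓗) ↔
    Dense {x : 𝓗 | ∃ h₁ ∈ selfAdjointOrbitClosure M Ω, ∃ h₂ ∈ selfAdjointOrbitClosure M Ω,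
      x = h₁ + I • h₂} := by
  constructor
  · refine fun h ↦ h.mono ?_
    rintro _ ⟨A, hA, rfl⟩
    exact ⟨_, apply_mem_selfAdjointOrbitClosure (M.realPart_mem hA) (ℜ A).2,
      _, apply_mem_selfAdjointOrbitClosure (M.imaginaryPart_mem hA) (ℑ A).2,
      (A.apply_eq_realPart_add_I_smul_imaginaryPart Ω)⟩
  · refine fun h ↦ dense_closure.mp (h.mono ?_)
    rintro _ ⟨h₁, hh₁, h₂, hh₂, rfl⟩
    rw [← Submodule.topologicalClosure_coe]
    exact add_mem (selfAdjointOrbitClosure_le hh₁)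
      (Submodule.smul_mem _ _ (selfAdjointOrbitClosure_le hh₂))

lemma smul_apply_apply_mem_selfAdjointOrbitClosure {D A : 𝓗 →L[ℂ] 𝓗} (hD : D ∈ M)
    (hDsa : IsSelfAdjoint D) (hDΩ : D Ω = 0) (hA : A ∈ M) (z : ℂ) :
    z • D (A Ω) ∈ selfAdjointOrbitClosure M Ω := by
  have hmem : z • (D * A) + star (z • (D * A)) ∈ M :=
    add_mem (M.smul_mem (mul_mem hD hA) z) (star_mem (M.smul_mem (mul_mem hD hA) z))
  convert apply_mem_selfAdjointOrbitClosure hmem (.add_star_self _) using 1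
  simp [star_smul, star_mul, hDsa.star_eq, hDΩ]

lemma eq_zero_of_isSelfAdjoint_of_apply_eq_zero
    (hH : ∀ x ∈ selfAdjointOrbitClosure M Ω,
      (∃ h ∈ selfAdjointOrbitClosure M Ω, x = I • h) → x = 0)
    (hcyc : Dense (orbit M Ω : Set 𝓗)) {D : 𝓗 →L[ℂ] 𝓗} (hD : D ∈ M) (hDsa : IsSelfAdjoint D)
    (hDΩ : D Ω = 0) : D = 0 := by
  refine DFunLike.coe_injective <|
    Continuous.ext_on hcyc D.continuous (0 : 𝓗 →L[ℂ] 𝓗).continuous ?_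
  rintro _ ⟨A, hA, rfl⟩
  have hI := smul_apply_apply_mem_selfAdjointOrbitClosure hD hDsa hDΩ hA I
  have h1 := smul_apply_apply_mem_selfAdjointOrbitClosure hD hDsa hDΩ hA 1
  rw [one_smul] at h1
  simpa [I_ne_zero] using hH _ hI ⟨_, h1, rfl⟩

lemma eq_zero_of_apply_eq_zero
    (hH : ∀ x ∈ selfAdjointOrbitClosure M Ω,
      (∃ h ∈ selfAdjointOrbitClosure M Ω, x = I • h) → x = 0)
    (hcyc : Dense (orbit M Ω : Set 𝓗)) {A : 𝓗 →L[ℂ] 𝓗} (hA : A ∈ M) (hAΩ : A Ω = 0) : A = 0 :=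
  (CStarRing.star_mul_self_eq_zero_iff A).mp <|
    eq_zero_of_isSelfAdjoint_of_apply_eq_zero hH hcyc (mul_mem (star_mem hA) hA)
      (.star_mul_self A) (by simp [hAΩ])

lemma dense_orbit_commutant_of_separating (hsep : ∀ A ∈ M, A Ω = 0 → A = 0) :
    Dense (orbit M.commutant Ω : Set 𝓗) := by
  set U := (orbit M.commutant Ω).topologicalClosure
  have hPM : U.starProjection ∈ M := by
    rw [IsStarProjection.mem_iff isStarProjection_starProjection, Submodule.range_starProjection]
    intro B hB
    refine Submodule.topologicalClosure_mem_invtSubmodule ((Module.End.mem_invtSubmodule _).mpr ?_)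
    rintro _ ⟨A, hA, rfl⟩
    exact apply_mem_orbit (mul_mem hB hA)
  have hΩ : Ω ∈ U := (orbit _ Ω).le_topologicalClosure ⟨1, one_mem _, rfl⟩
  have hP : U.starProjection = 1 := sub_eq_zero.mp <| hsep _ (sub_mem hPM (one_mem M)) <| by
    simp [Submodule.starProjection_eq_self_iff.mpr hΩ]
  refine Submodule.dense_iff_topologicalClosure_eq_top.mpr (show U = ⊤ from ?_)
  rw [← U.range_starProjection, hP]
  exact LinearMap.range_id

lemma im_inner_eq_zero_of_mem_commutant {B : 𝓗 →L[ℂ] 𝓗} (hB : B ∈ M.commutant)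
    (hBsa : IsSelfAdjoint B) {x : 𝓗} (hx : x ∈ selfAdjointOrbitClosure M Ω) :
    (inner ℂ (B Ω) x).im = 0 := by
  let f : 𝓗 →L[ℝ] ℝ := imCLM.comp ((innerSL ℂ (B Ω)).restrictScalars ℝ)
  suffices selfAdjointOrbitClosure M Ω ≤ LinearMap.ker (f : 𝓗 →ₗ[ℝ] ℝ) from this hx
  refine Submodule.topologicalClosure_minimal _ (Submodule.span_le.mpr ?_) f.isClosed_ker
  rintro _ ⟨A, hA, hAsa, rfl⟩
  have hsymm : inner ℂ (B Ω) (A Ω) = inner ℂ (A Ω) (B Ω) :=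
    calc inner ℂ (B Ω) (A Ω) = inner ℂ Ω (B (A Ω)) := hBsa.isSymmetric Ω (A Ω)
      _ = inner ℂ Ω (A (B Ω)) := congr(inner ℂ Ω ($(mem_commutant_iff.mp hB A hA) Ω)).symm
      _ = inner ℂ (A Ω) (B Ω) := (hAsa.isSymmetric Ω (B Ω)).symm
  show (inner ℂ (B Ω) (A Ω)).im = 0
  rw [← conj_eq_iff_im, inner_conj_symm, hsymm]

lemma eq_zero_of_mem_of_I_smul_mem (hsep : ∀ A ∈ M, A Ω = 0 → A = 0) {h : 𝓗}
    (hh : h ∈ selfAdjointOrbitClosure M Ω) (hIh : I • h ∈ selfAdjointOrbitClosure M Ω) :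
    h = 0 := by
  have hsa : ∀ B ∈ M.commutant, IsSelfAdjoint B → inner ℂ (B Ω) h = 0 := by
    intro B hB hBsa
    have hre := im_inner_eq_zero_of_mem_commutant hB hBsa hIh
    rw [inner_smul_right, mul_im, I_re, I_im, zero_mul, one_mul, zero_add] at hre
    exact Complex.ext hre (im_inner_eq_zero_of_mem_commutant hB hBsa hh)
  have horth : h ∈ (orbit M.commutant Ω)ᗮ := by
    rw [Submodule.mem_orthogonal]
    rintro _ ⟨B, hB, rfl⟩
    rw [B.apply_eq_realPart_add_I_smul_imaginaryPart, inner_add_left, inner_smul_left,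
      hsa _ (M.commutant.realPart_mem hB) (ℜ B).2,
      hsa _ (M.commutant.imaginaryPart_mem hB) (ℑ B).2, mul_zero, add_zero]
  rwa [Submodule.topologicalClosure_eq_top_iff.mp
    (Submodule.dense_iff_topologicalClosure_eq_top.mp (dense_orbit_commutant_of_separating hsep)),
    Submodule.mem_bot] at horth

end VonNeumannAlgebra

/-- for a von Neumann algebra `M` on `𝓗` and a vector `Ω`, the closure of the
real span of `{AΩ : A ∈ M, A = A*}` is a standard subspace iff `Ω` is cyclic and separating
for `M`. -/
theorem isStandardSubspace_selfAdjoint_orbit_iff_cyclic_separating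
    {𝓗 : Type*} [NormedAddCommGroup 𝓗] [InnerProductSpace ℂ 𝓗] [CompleteSpace 𝓗]
    (M : VonNeumannAlgebra 𝓗) (Ω : 𝓗) :
    IsStandardSubspace
      ((Submodule.span ℝ {x : 𝓗 | ∃ A ∈ M, IsSelfAdjoint A ∧ x = A Ω}).topologicalClosure) ↔
    (Dense {x : 𝓗 | ∃ A ∈ M, x = A Ω} ∧ ∀ A ∈ M, A Ω = 0 → A = 0) := by
  change IsStandardSubspace (M.selfAdjointOrbitClosure Ω) ↔
    Dense (M.orbit Ω : Set 𝓗) ∧ ∀ A ∈ M, A Ω = 0 → A = 0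
  constructor
  · rintro ⟨-, hdense, hH⟩
    have hcyc := (M.dense_orbit_iff_dense_add_I_smul Ω).mpr hdense
    exact ⟨hcyc, fun A hA hAΩ ↦ VonNeumannAlgebra.eq_zero_of_apply_eq_zero hH hcyc hA hAΩ⟩
  · rintro ⟨hcyc, hsep⟩
    refine ⟨Submodule.isClosed_topologicalClosure _,
      (M.dense_orbit_iff_dense_add_I_smul Ω).mp hcyc, ?_⟩
    rintro x hx ⟨h, hh, rfl⟩
    rw [VonNeumannAlgebra.eq_zero_of_mem_of_I_smul_mem hsep hh hx, smul_zero]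
end

section
/- Let 𝓗 be a complex Hilbert space with a Hilbert basis (orthonormal basis) (e_n)_{n ∈ ι} for a nonempty index type ι. Then the closure H of the real-linear span of {e_n : n ∈ ι} is a standard subspace of 𝓗. -/
open Complex

section

variable {E : Type*} [NormedAddCommGroup E] [InnerProductSpace ℂ E]

theorem Orthonormal.im_inner_eq_zero_of_mem_closure_span_real {ι : Type*} {v : ι → E}
    (hv : Orthonormal ℂ v) {x : E}
    (hx : x ∈ (Submodule.span ℝ (Set.range v)).topologicalClosure) (i : ι) :
    (inner ℂ (v i) x).im = 0 := by
  let imCoord : E →L[ℝ] ℝ := imCLM.comp ((innerSL ℂ (v i)).restrictScalars ℝ)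
  suffices (Submodule.span ℝ (Set.range v)).topologicalClosure ≤
      LinearMap.ker (imCoord : E →ₗ[ℝ] ℝ) from this hx
  refine Submodule.topologicalClosure_minimal _ ?_ imCoord.isClosed_ker
  rw [Submodule.span_le]
  rintro _ ⟨j, rfl⟩
  classical
  change (inner ℂ (v i) (v j)).im = 0
  rw [orthonormal_iff_ite.mp hv i j]
  split_ifs <;> simp

theorem Submodule.exists_add_I_smul_of_mem_span_complex (H : Submodule ℝ E) {x : E}
    (hx : x ∈ Submodule.span ℂ (H : Set E)) :
    ∃ h₁ ∈ H, ∃ h₂ ∈ H, x = h₁ + I • h₂ := by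
  induction hx using Submodule.span_induction with
  | mem x hx => exact ⟨x, hx, 0, H.zero_mem, by simp⟩
  | zero => exact ⟨0, H.zero_mem, 0, H.zero_mem, by simp⟩
  | add x y _ _ ihx ihy =>
    obtain ⟨a, ha, c, hc, rfl⟩ := ihx
    obtain ⟨d, hd, e, he, rfl⟩ := ihy
    exact ⟨a + d, H.add_mem ha hd, c + e, H.add_mem hc he, by rw [smul_add]; abel⟩
  | smul z x _ ihx =>
    obtain ⟨a, ha, c, hc, rfl⟩ := ihx
    -- `(re z + i im z)(a + i c) = (re z • a - im z • c) + i (im z • a + re z • c)`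
    refine ⟨z.re • a - z.im • c, H.sub_mem (H.smul_mem _ ha) (H.smul_mem _ hc),
      z.im • a + z.re • c, H.add_mem (H.smul_mem _ ha) (H.smul_mem _ hc), ?_⟩
    simp only [← Complex.coe_smul]
    match_scalars <;> simp [Complex.ext_iff]

end

theorem HilbertBasis.eq_zero_of_forall_inner_eq_zero {ι 𝕜 E : Type*} [RCLike 𝕜]
    [NormedAddCommGroup E] [InnerProductSpace 𝕜 E] [CompleteSpace E]
    (b : HilbertBasis ι 𝕜 E) {x : E} (hx : ∀ i, inner 𝕜 (b i) x = 0) : x = 0 := by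
  have : b.repr x = 0 := by
    ext i
    simpa [HilbertBasis.repr_apply_apply] using hx i
  simpa using congrArg b.repr.symm this

theorem isStandardSubspace_closure_real_span_hilbertBasis_general
    {𝓗 : Type*} [NormedAddCommGroup 𝓗] [InnerProductSpace ℂ 𝓗] [CompleteSpace 𝓗]
    {ι : Type*} (b : HilbertBasis ι ℂ 𝓗) :
    IsStandardSubspace
      ((Submodule.span ℝ (Set.range fun i : ι => b i)).topologicalClosure) := by
  set H := (Submodule.span ℝ (Set.range fun i : ι => b i)).topologicalClosure
  have real_coord : ∀ x ∈ H, ∀ i, (inner ℂ (b i) x).im = 0 := fun x hx i =>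
    b.orthonormal.im_inner_eq_zero_of_mem_closure_span_real hx i
  refine ⟨Submodule.isClosed_topologicalClosure _, ?_, ?_⟩
  · have basis_le : Submodule.span ℂ (Set.range b) ≤ Submodule.span ℂ (H : Set 𝓗) :=
      Submodule.span_mono ((Submodule.subset_span).trans (Submodule.le_topologicalClosure _))
    refine (Submodule.dense_iff_topologicalClosure_eq_top.mpr b.dense_span).mono ?_
    exact fun x hx => H.exists_add_I_smul_of_mem_span_complex (basis_le hx)
  · rintro _ hIx ⟨x, hx, rfl⟩
    suffices x = 0 by rw [this, smul_zero]
    refine b.eq_zero_of_forall_inner_eq_zero fun i => Complex.ext ?_ (real_coord x hx i)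
    simpa [inner_smul_right] using real_coord _ hIx i

/-- the closure of the real span of a Hilbert (orthonormal) basis of a complex
Hilbert space is a (maximally abelian) standard subspace. -/
theorem isStandardSubspace_closure_real_span_hilbertBasis
    {𝓗 : Type*} [NormedAddCommGroup 𝓗] [InnerProductSpace ℂ 𝓗] [CompleteSpace 𝓗]
    {ι : Type*} [Nonempty ι] (b : HilbertBasis ι ℂ 𝓗) :
    IsStandardSubspace
      ((Submodule.span ℝ (Set.range fun i : ι => b i)).topologicalClosure) :=
  isStandardSubspace_closure_real_span_hilbertBasis_general b
end

section
/- Let ι be a nonempty finite type and T : Matrix (ι × ι) (ι × ι) ℂ a Hermitian matrix whose operator norm (as a linear operator on EuclideanSpace ℂ (ι × ι)) is at most 1/2. Then for every n ∈ ℕ, the twisted symmetrizer matrix P_{T,n} is positive definite; in particular T is a strict twist. -/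
open scoped ComplexOrder
/-- The operator `T_k` acting on the `(k-1, k)` coordinates (0-indexed) of `Fin n → ι` by the
matrix `T`, and as the identity on the remaining coordinates, for `1 ≤ k ≤ n - 1`. -/
def twistLeg {ι : Type*} [Fintype ι] [DecidableEq ι] (T : Matrix (ι × ι) (ι × ι) ℂ)
    (n k : ℕ) : Matrix (Fin n → ι) (Fin n → ι) ℂ :=
  Matrix.of fun g f =>
    if h : 1 ≤ k ∧ k < n then
      if ∀ j : Fin n, j ≠ (⟨k - 1, by omega⟩ : Fin n) → j ≠ (⟨k, h.2⟩ : Fin n) → g j = f j then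
        T (g ⟨k - 1, by omega⟩, g ⟨k, h.2⟩) (f ⟨k - 1, by omega⟩, f ⟨k, h.2⟩)
      else 0
    else 0

/-- The ampliation `E_n(P)` acting as the identity on the 0-th coordinate and as `P` on the
remaining `n` coordinates. -/
def ampMat {ι : Type*} [DecidableEq ι] (n : ℕ) (P : Matrix (Fin n → ι) (Fin n → ι) ℂ) :
    Matrix (Fin (n + 1) → ι) (Fin (n + 1) → ι) ℂ :=
  Matrix.of fun g f => if g 0 = f 0 then P (g ∘ Fin.succ) (f ∘ Fin.succ) else 0

/-- The twisted symmetrizers `P_{T,n}`, defined by the left recursion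
`P_{T,n+1} = E_n(P_{T,n}) * (1 + T_1 + T_1 T_2 + ⋯ + T_1 ⋯ T_n)`. -/
noncomputable def twistedSymmetrizer {ι : Type*} [Fintype ι] [DecidableEq ι]
    (T : Matrix (ι × ι) (ι × ι) ℂ) : (n : ℕ) → Matrix (Fin n → ι) (Fin n → ι) ℂ
  | 0 => 1
  | n + 1 =>
      ampMat n (twistedSymmetrizer T n) *
        ∑ k ∈ Finset.range (n + 1),
          ((List.range k).map (fun j => twistLeg T (n + 1) (j + 1))).prod

/-!
Write `R_n = 1 + T_1 + T_1 T_2 + ⋯ + T_1 ⋯ T_n` (`twistLegSum T n`), so that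
`P_{T,n+1} = E_n(P_{T,n}) R_n` and `R_{n+1} = 1 + T_1 E_{n+1}(R_n)`. Since `T_1` acts on the first
two tensor factors and `E_{n+1}(E_n(M))` on the others, they commute, and induction gives
`E_n(P_{T,n}) R_n = R_nᴴ E_n(P_{T,n})`: every `P_{T,n}` is Hermitian.

Up to reordering the factors, `T_1 = 1 ⊗ T` and `T_{k+1} = E(T_k)`; star-algebra homomorphisms
between C⋆-algebras are contractive, so `‖T_k‖ ≤ ‖T‖ ≤ 1/2`, `‖R_n - 1‖ ≤ 1/2 + ⋯ + 1/2ⁿ < 1` and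
`Re ⟨x, R_n x⟩ > 0` for `x ≠ 0`. If `P_{T,n+1} v = λ v` with `v ≠ 0`, then
`R_n v = λ E_n(P_{T,n})⁻¹ v`, and the real part of `⟨v, R_n v⟩` shows `λ > 0` whenever `P_{T,n}`
is positive definite.
-/

open Matrix
open scoped Kronecker Matrix.Norms.L2Operator

lemma ContinuousLinearMap.re_inner_self_apply_pos_of_norm_sub_one_lt {𝕜 E : Type*}
    [RCLike 𝕜] [NormedAddCommGroup E] [InnerProductSpace 𝕜 E] {A : E →L[𝕜] E}
    (hA : ‖A - 1‖ < 1) {x : E} (hx : x ≠ 0) : 0 < RCLike.re (inner 𝕜 x (A x)) := by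
  have hsplit : inner 𝕜 x (A x) = inner 𝕜 x x + inner 𝕜 x ((A - 1) x) := by
    rw [← inner_add_right]
    simp
  have hbound : |RCLike.re (inner 𝕜 x ((A - 1) x))| ≤ ‖A - 1‖ * ‖x‖ ^ 2 :=
    calc |RCLike.re (inner 𝕜 x ((A - 1) x))| ≤ ‖x‖ * ‖(A - 1) x‖ :=
          (RCLike.abs_re_le_norm _).trans (norm_inner_le_norm _ _)
      _ ≤ ‖x‖ * (‖A - 1‖ * ‖x‖) := by gcongr; exact (A - 1).le_opNorm x
      _ = ‖A - 1‖ * ‖x‖ ^ 2 := by ring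
  have hx2 : 0 < ‖x‖ ^ 2 := by positivity
  rw [hsplit, map_add, inner_self_eq_norm_sq]
  nlinarith [abs_le.mp hbound]

namespace Matrix

section OneKronecker

variable {R X p r : Type*} [CommSemiring R] [StarRing R] [Fintype p] [DecidableEq p]
  [Fintype r] [DecidableEq r] [Fintype X] [DecidableEq X]

def oneKroneckerStarAlgHom (e : X ≃ r × p) : Matrix p p R →⋆ₐ[R] Matrix X X R where
  toFun A := ((1 : Matrix r r R) ⊗ₖ A).submatrix e e
  map_one' := by simp
  map_mul' A B := by rw [submatrix_mul_equiv, ← mul_kronecker_mul, one_mul]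
  map_zero' := by simp
  map_add' A B := by rw [kronecker_add]; rfl
  commutes' c := by
    rw [Algebra.algebraMap_eq_smul_one, Algebra.algebraMap_eq_smul_one, kronecker_smul,
      one_kronecker_one, ← submatrix_one_equiv e]
    rfl
  map_star' A := by simp [star_eq_conjTranspose, conjTranspose_submatrix, conjTranspose_kronecker]

lemma oneKroneckerStarAlgHom_apply (e : X ≃ r × p) (A : Matrix p p R) :
    oneKroneckerStarAlgHom e A = ((1 : Matrix r r R) ⊗ₖ A).submatrix e e := rfl

end OneKronecker

variable {𝕜 m : Type*} [RCLike 𝕜] [Fintype m] [DecidableEq m]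

lemma re_star_dotProduct_mulVec_pos_of_norm_sub_one_lt {A : Matrix m m 𝕜} (hA : ‖A - 1‖ < 1)
    {x : m → 𝕜} (hx : x ≠ 0) : 0 < RCLike.re (star x ⬝ᵥ A *ᵥ x) := by
  have h := ContinuousLinearMap.re_inner_self_apply_pos_of_norm_sub_one_lt
    (A := toEuclideanCLM (𝕜 := 𝕜) A) (x := WithLp.toLp 2 x)
    (by rwa [← map_one (toEuclideanCLM (n := m) (𝕜 := 𝕜)), ← map_sub])
    (by simpa using hx)
  rwa [toEuclideanCLM_toLp, EuclideanSpace.inner_toLp_toLp, dotProduct_comm] at h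

lemma IsHermitian.posDef_of_eq_mul {P A R : Matrix m m 𝕜} (hP : P.IsHermitian) (hA : A.PosDef)
    (hPAR : P = A * R) (hR : ∀ x : m → 𝕜, x ≠ 0 → 0 < RCLike.re (star x ⬝ᵥ R *ᵥ x)) :
    P.PosDef := by
  refine hP.posDef_iff_eigenvalues_pos.mpr fun i => ?_
  obtain ⟨v, hv, hPv⟩ : ∃ v : m → 𝕜, v ≠ 0 ∧ P *ᵥ v = hP.eigenvalues i • v :=
    ⟨_, by simpa using hP.eigenvectorBasis.orthonormal.ne_zero i, hP.mulVec_eigenvectorBasis i⟩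
  have hRv : R *ᵥ v = hP.eigenvalues i • (A⁻¹ *ᵥ v) := by
    rw [← mulVec_smul, ← hPv, mulVec_mulVec, hPAR, ← Matrix.mul_assoc,
      nonsing_inv_mul _ ((isUnit_iff_isUnit_det A).mp hA.isUnit), Matrix.one_mul]
  have hpos := hR v hv
  rw [hRv, dotProduct_smul, RCLike.smul_re] at hpos
  exact pos_of_mul_pos_left hpos (hA.inv.re_dotProduct_pos hv).le

end Matrix

@[simps]
def splitFirstTwo (ι : Type*) (n : ℕ) : (Fin (n + 2) → ι) ≃ (Fin n → ι) × (ι × ι) where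
  toFun g := (fun i => g i.succ.succ, (g 0, g 1))
  invFun x := Fin.cons x.2.1 (Fin.cons x.2.2 x.1)
  left_inv g := by
    ext j
    exact Fin.cases rfl (fun i => Fin.cases rfl (fun l => rfl) i) j
  right_inv x := rfl

noncomputable def ampMatHom (ι : Type*) [Fintype ι] [DecidableEq ι] (n : ℕ) :
    Matrix (Fin n → ι) (Fin n → ι) ℂ →⋆ₐ[ℂ] Matrix (Fin (n + 1) → ι) (Fin (n + 1) → ι) ℂ :=
  oneKroneckerStarAlgHom (Fin.consEquiv fun _ => ι).symm

section Twist

variable {ι : Type*} [DecidableEq ι]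

lemma ampMat_ampMat_eq (n : ℕ) (M : Matrix (Fin n → ι) (Fin n → ι) ℂ) :
    ampMat (n + 1) (ampMat n M) = (M ⊗ₖ (1 : Matrix (ι × ι) (ι × ι) ℂ)).submatrix
      (splitFirstTwo ι n) (splitFirstTwo ι n) := by
  ext g f
  by_cases h0 : g 0 = f 0 <;> by_cases h1 : g 1 = f 1 <;>
    simp [ampMat, one_apply, h0, h1, Function.comp_def]

variable [Fintype ι]

lemma coe_ampMatHom (n : ℕ) : ⇑(ampMatHom ι n) = ampMat n := by
  ext P g f
  simp only [ampMatHom, Fin.consEquiv, Equiv.symm_mk, oneKroneckerStarAlgHom_apply,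
    Equiv.coe_fn_mk, submatrix_apply, kroneckerMap_apply, one_apply, ite_mul, one_mul, zero_mul,
    ampMat, of_apply]
  rfl

lemma ampMat_mul (n : ℕ) (P Q : Matrix (Fin n → ι) (Fin n → ι) ℂ) :
    ampMat n (P * Q) = ampMat n P * ampMat n Q := by
  simp only [← coe_ampMatHom, map_mul]

lemma ampMat_sum {α : Type*} (n : ℕ) (s : Finset α)
    (P : α → Matrix (Fin n → ι) (Fin n → ι) ℂ) :
    ampMat n (∑ k ∈ s, P k) = ∑ k ∈ s, ampMat n (P k) := by
  simp only [← coe_ampMatHom, map_sum]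

lemma ampMat_list_prod (n : ℕ) (l : List (Matrix (Fin n → ι) (Fin n → ι) ℂ)) :
    ampMat n l.prod = (l.map (ampMat n)).prod := by
  rw [← coe_ampMatHom, map_list_prod]

lemma ampMat_conjTranspose (n : ℕ) (P : Matrix (Fin n → ι) (Fin n → ι) ℂ) :
    (ampMat n P)ᴴ = ampMat n Pᴴ := by
  simp only [← coe_ampMatHom, ← star_eq_conjTranspose, map_star]

lemma posDef_ampMat {n : ℕ} {P : Matrix (Fin n → ι) (Fin n → ι) ℂ} (hP : P.PosDef) :
    (ampMat n P).PosDef := by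
  rw [← coe_ampMatHom]
  exact (PosDef.one.kronecker hP).submatrix (Equiv.injective _)

lemma norm_ampMat_le (n : ℕ) (P : Matrix (Fin n → ι) (Fin n → ι) ℂ) : ‖ampMat n P‖ ≤ ‖P‖ := by
  rw [← coe_ampMatHom]
  exact NonUnitalStarAlgHom.norm_apply_le _ _

lemma twistLeg_eq_zero (T : Matrix (ι × ι) (ι × ι) ℂ) {n k : ℕ} (h : ¬(1 ≤ k ∧ k < n)) :
    twistLeg T n k = 0 := by
  ext g f
  simp [twistLeg, h]

lemma twistLeg_succ_apply (T : Matrix (ι × ι) (ι × ι) ℂ) {n k : ℕ} (h : k + 1 < n)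
    (g f : Fin n → ι) :
    twistLeg T n (k + 1) g f =
      if ∀ j : Fin n, (j : ℕ) ≠ k → (j : ℕ) ≠ k + 1 → g j = f j then
        T (g ⟨k, by omega⟩, g ⟨k + 1, h⟩) (f ⟨k, by omega⟩, f ⟨k + 1, h⟩)
      else 0 := by
  simp [twistLeg, h, Fin.ext_iff]

lemma ampMat_twistLeg (T : Matrix (ι × ι) (ι × ι) ℂ) (n k : ℕ) :
    ampMat n (twistLeg T n (k + 1)) = twistLeg T (n + 1) (k + 2) := by
  by_cases h : k + 1 < n
  · ext g f
    rw [twistLeg_succ_apply T (by omega : k + 1 + 1 < n + 1), ampMat, of_apply,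
      twistLeg_succ_apply T h]
    by_cases hg : g 0 = f 0 <;> simp [hg, Fin.forall_fin_succ]
  · rw [twistLeg_eq_zero T (by omega), twistLeg_eq_zero T (by omega)]
    ext
    simp [ampMat]

lemma twistLeg_one_eq (T : Matrix (ι × ι) (ι × ι) ℂ) (n : ℕ) :
    twistLeg T (n + 2) 1 = oneKroneckerStarAlgHom (splitFirstTwo ι n) T := by
  ext g f
  rw [twistLeg_succ_apply T (by omega : 0 + 1 < n + 2)]
  simp [oneKroneckerStarAlgHom_apply, one_apply, funext_iff, Fin.forall_fin_succ]

lemma twistLeg_one_isHermitian {T : Matrix (ι × ι) (ι × ι) ℂ} (hT : T.IsHermitian) (n : ℕ) :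
    (twistLeg T (n + 2) 1).IsHermitian := by
  rw [IsHermitian, ← star_eq_conjTranspose, twistLeg_one_eq, ← map_star, star_eq_conjTranspose,
    hT.eq]

/-- After `splitFirstTwo`, the two sides are `1 ⊗ₖ T` and `M ⊗ₖ 1`. -/
lemma twistLeg_one_mul_ampMat_ampMat (T : Matrix (ι × ι) (ι × ι) ℂ) (n : ℕ)
    (M : Matrix (Fin n → ι) (Fin n → ι) ℂ) :
    twistLeg T (n + 2) 1 * ampMat (n + 1) (ampMat n M) =
      ampMat (n + 1) (ampMat n M) * twistLeg T (n + 2) 1 := by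
  simp only [twistLeg_one_eq, oneKroneckerStarAlgHom_apply, ampMat_ampMat_eq,
    submatrix_mul_equiv, ← mul_kronecker_mul, one_mul, mul_one]

lemma norm_twistLeg_le (T : Matrix (ι × ι) (ι × ι) ℂ) (n k : ℕ) : ‖twistLeg T n k‖ ≤ ‖T‖ := by
  induction k generalizing n with
  | zero => simp [twistLeg_eq_zero T (n := n) (k := 0) (by omega)]
  | succ k ih =>
    rcases k with _ | k
    · rcases n with _ | _ | n
      · simp [twistLeg_eq_zero T (n := 0) (k := 1) (by omega)]
      · simp [twistLeg_eq_zero T (n := 1) (k := 1) (by omega)]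
      · rw [twistLeg_one_eq]
        exact NonUnitalStarAlgHom.norm_apply_le _ _
    · rcases n with _ | n
      · simp [twistLeg_eq_zero T (n := 0) (k := k + 2) (by omega)]
      · rw [← ampMat_twistLeg]
        exact (norm_ampMat_le n _).trans (ih n)

noncomputable def twistLegSum (T : Matrix (ι × ι) (ι × ι) ℂ) (n : ℕ) :
    Matrix (Fin (n + 1) → ι) (Fin (n + 1) → ι) ℂ :=
  ∑ k ∈ Finset.range (n + 1), ((List.range k).map fun j => twistLeg T (n + 1) (j + 1)).prod

lemma twistLegSum_zero (T : Matrix (ι × ι) (ι × ι) ℂ) : twistLegSum T 0 = 1 := by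
  simp [twistLegSum]

lemma twistLegSum_succ (T : Matrix (ι × ι) (ι × ι) ℂ) (n : ℕ) :
    twistLegSum T (n + 1) = 1 + twistLeg T (n + 2) 1 * ampMat (n + 1) (twistLegSum T n) := by
  have hterm (k : ℕ) : ((List.range (k + 1)).map fun j => twistLeg T (n + 2) (j + 1)).prod =
      twistLeg T (n + 2) 1 *
        ampMat (n + 1) ((List.range k).map fun j => twistLeg T (n + 1) (j + 1)).prod := by
    simp [List.range_succ_eq_map, ampMat_list_prod, Function.comp_def, ampMat_twistLeg]
  show ∑ k ∈ Finset.range (n + 2), ((List.range k).map fun j => twistLeg T (n + 2) (j + 1)).prod = _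
  rw [Finset.sum_range_succ', twistLegSum, ampMat_sum, Finset.mul_sum]
  simp [hterm, add_comm]

lemma norm_twistLegSum_sub_one_le (T : Matrix (ι × ι) (ι × ι) ℂ) (n : ℕ) :
    ‖twistLegSum T n - 1‖ ≤ ∑ k ∈ Finset.range n, ‖T‖ ^ (k + 1) := by
  rw [twistLegSum, Finset.sum_range_succ', List.range_zero, List.map_nil, List.prod_nil,
    add_sub_cancel_right]
  refine (norm_sum_le _ _).trans (Finset.sum_le_sum fun k _ => ?_)
  calc ‖((List.range (k + 1)).map fun j => twistLeg T (n + 1) (j + 1)).prod‖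
      ≤ ((List.range (k + 1)).map fun j => ‖twistLeg T (n + 1) (j + 1)‖).prod :=
        (List.norm_prod_le' (by simp)).trans_eq (by simp [List.map_map, Function.comp_def])
    _ ≤ ((List.range (k + 1)).map fun _ => ‖T‖).prod :=
        List.prod_map_le_prod_map₀ _ _ (fun _ _ => norm_nonneg _)
          fun j _ => norm_twistLeg_le T _ _
    _ = ‖T‖ ^ (k + 1) := by simp

lemma norm_twistLegSum_sub_one_lt_one {T : Matrix (ι × ι) (ι × ι) ℂ} (hT : ‖T‖ ≤ 1 / 2)
    (n : ℕ) : ‖twistLegSum T n - 1‖ < 1 := by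
  calc ‖twistLegSum T n - 1‖ ≤ ∑ k ∈ Finset.range n, ‖T‖ ^ (k + 1) :=
        norm_twistLegSum_sub_one_le T n
    _ ≤ ∑ k ∈ Finset.range n, (1 / 2 : ℝ) ^ (k + 1) := by gcongr
    _ = 1 - (1 / 2) ^ n := by
        induction n with
        | zero => simp
        | succ n ih => rw [Finset.sum_range_succ, ih]; ring
    _ < 1 := by linarith [pow_pos (by norm_num : (0 : ℝ) < 1 / 2) n]

lemma twistedSymmetrizer_succ (T : Matrix (ι × ι) (ι × ι) ℂ) (n : ℕ) :
    twistedSymmetrizer T (n + 1) = ampMat n (twistedSymmetrizer T n) * twistLegSum T n := rfl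

lemma twistedSymmetrizer_succ_eq_conjTranspose_mul {T : Matrix (ι × ι) (ι × ι) ℂ}
    (hT : T.IsHermitian) (n : ℕ) :
    twistedSymmetrizer T (n + 1) = (twistLegSum T n)ᴴ * ampMat n (twistedSymmetrizer T n) := by
  induction n with
  | zero => simp [twistLegSum_zero, twistedSymmetrizer, ← coe_ampMatHom]
  | succ n ih =>
    set A := ampMat (n + 1) (ampMat n (twistedSymmetrizer T n))
    set S := ampMat (n + 1) (twistLegSum T n)
    set t := twistLeg T (n + 2) 1
    have hAS : ampMat (n + 1) (twistedSymmetrizer T (n + 1)) = A * S := by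
      rw [twistedSymmetrizer_succ, ampMat_mul]
    have hSA : A * S = Sᴴ * A := by
      rw [← hAS, ih, ampMat_mul, ampMat_conjTranspose]
    have htA : t * A = A * t := twistLeg_one_mul_ampMat_ampMat T n _
    rw [twistedSymmetrizer_succ, twistLegSum_succ, hAS, conjTranspose_add, conjTranspose_mul,
      (twistLeg_one_isHermitian hT n).eq, conjTranspose_one, mul_add, add_mul, mul_one, one_mul]
    congr 1
    calc A * S * (t * S) = Sᴴ * (A * t) * S := by rw [hSA]; noncomm_ring
      _ = Sᴴ * t * (A * S) := by rw [← htA]; noncomm_ring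

lemma twistedSymmetrizer_isHermitian {T : Matrix (ι × ι) (ι × ι) ℂ} (hT : T.IsHermitian) :
    ∀ n, (twistedSymmetrizer T n).IsHermitian
  | 0 => isHermitian_one
  | n + 1 => by
    rw [IsHermitian, twistedSymmetrizer_succ, conjTranspose_mul, ampMat_conjTranspose,
      (twistedSymmetrizer_isHermitian hT n).eq, ← twistedSymmetrizer_succ_eq_conjTranspose_mul hT,
      twistedSymmetrizer_succ]

end Twist

theorem twistedSymmetrizer_posDef_of_norm_le_half_general
    {ι : Type*} [Fintype ι] [DecidableEq ι]
    (T : Matrix (ι × ι) (ι × ι) ℂ) (hT : T.IsHermitian)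
    (hnorm : ‖Matrix.toEuclideanCLM (𝕜 := ℂ) T‖ ≤ 1 / 2) :
    ∀ n : ℕ, (twistedSymmetrizer T n).PosDef := by
  intro n
  induction n with
  | zero => exact PosDef.one
  | succ n ih =>
    refine (twistedSymmetrizer_isHermitian hT (n + 1)).posDef_of_eq_mul (posDef_ampMat ih)
      (twistedSymmetrizer_succ T n) fun x hx => ?_
    exact re_star_dotProduct_mulVec_pos_of_norm_sub_one_lt
      (norm_twistLegSum_sub_one_lt_one hnorm n) hx

/-- a Hermitian `T` with operator norm at most `1/2` is a strict twist: all
twisted symmetrizers `P_{T,n}` are positive definite. -/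
theorem twistedSymmetrizer_posDef_of_norm_le_half
    {ι : Type*} [Fintype ι] [DecidableEq ι] [Nonempty ι]
    (T : Matrix (ι × ι) (ι × ι) ℂ) (hT : T.IsHermitian)
    (hnorm : ‖Matrix.toEuclideanCLM (𝕜 := ℂ) T‖ ≤ 1 / 2) :
    ∀ n : ℕ, (twistedSymmetrizer T n).PosDef :=
  twistedSymmetrizer_posDef_of_norm_le_half_general T hT hnorm
end
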